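/- arXiv:1411.6414 — 4 statements merged into one kernel-verified Lean document; each statement's English description precedes it below -/
import Mathlib

section
/- Under conditions (P1)–(P2), the error bound modulus admits the equivalent representations: Er f(x̄,ȳ) = liminf_{x→x̄, y→ȳ, f(x,y)>0} f(x,y)/d(x,S(f)) = liminf_{x→x̄, f(x,y)↓0} f(x,y)/d(x,S(f)), where in the second representation the liminf is taken over pairs (x,y) with x → x̄, f(x,y) > 0 and f(x,y) → 0. -/
open Filter Metric Set Topology
open scoped Classical

noncomputable section

namespace HolderPaper

/-- Extended-real quotient `a / d` of an extended real by a nonnegative real,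
with the convention that division by `0` yields `⊤`. -/
def equot (a : EReal) (d : ℝ) : EReal := if d = 0 then ⊤ else a * ((d⁻¹ : ℝ) : EReal)

section MetricDefs

variable {X Y : Type*} [MetricSpace X] [MetricSpace Y]

/-- The asymmetric maximum-type distance `d_ρ((x,y),(u,v)) = max{d(x,u), ρ d(y,v)}`. -/
def drho (ρ : ℝ) (p q : X × Y) : ℝ := max (dist p.1 q.1) (ρ * dist p.2 q.2)

/-- Positive part `f₊`. -/
def fplus (f : X × Y → EReal) (p : X × Y) : EReal := max (f p) 0

/-- Condition (P1): `f(x,y) > 0` whenever `y ≠ ybar`. -/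
def P1 (f : X × Y → EReal) (ybar : Y) : Prop := ∀ p : X × Y, p.2 ≠ ybar → 0 < f p

/-- Condition (P2): `liminf_{f(x,y)↓0} f(x,y)/d(y,ybar) > 0`. -/
def P2 (f : X × Y → EReal) (ybar : Y) : Prop :=
  0 < liminf (fun p : X × Y => equot (f p) (dist p.2 ybar)) ((𝓝[>] (0 : EReal)).comap f)

/-- The lower 0-level set `S(f) = {x | f(x,ybar) ≤ 0}`. -/
def Sf (f : X × Y → EReal) (ybar : Y) : Set X := {x | f (x, ybar) ≤ 0}

/-- The error bound modulus `Er f(xbar,ybar)`: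
`liminf` of `f(x,y)/d(x,S(f))` over pairs `(x,y)` with `f(x,y) > 0` as `x → xbar`. -/
def erMod (f : X × Y → EReal) (xbar : X) (ybar : Y) : EReal :=
  liminf (fun p : X × Y => equot (f p) (infDist p.1 (Sf f ybar)))
    ((𝓝 xbar).comap Prod.fst ⊓ 𝓟 {p : X × Y | 0 < f p})

/-- `f` has an error bound w.r.t. `x` at `(xbar,ybar)` with constant `τ`. -/
def hasErrorBound (f : X × Y → EReal) (xbar : X) (ybar : Y) (τ : ℝ) : Prop :=
  ∃ U ∈ 𝓝 xbar, ∀ x ∈ U, ∀ y : Y, ((τ * infDist x (Sf f ybar) : ℝ) : EReal) ≤ fplus f (x, y)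

/-- The nonlocal ρ-slope `|∇f|◇_ρ(x,y)` (set to `⊤` if `f(x,y) = ⊤`). -/
def nslope (f : X × Y → EReal) (ρ : ℝ) (p : X × Y) : EReal :=
  if f p = ⊤ then ⊤
  else ⨆ (q : X × Y) (_ : q ≠ p), equot (max (f p - fplus f q) 0) (drho ρ p q)

/-- The (local) ρ-slope `|∇f|_ρ(x,y)`. -/
def lslope (f : X × Y → EReal) (ρ : ℝ) (p : X × Y) : EReal :=
  limsup (fun q : X × Y => equot (max (f p - f q) 0) (drho ρ q p)) (𝓝[≠] p)

/-- The uniform strict outer slope `\overline{|∇f|}^◇(xbar,ybar)`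
(`lim_{ρ↓0}` of a quantity nonincreasing in `ρ`, i.e. the supremum over `ρ > 0`). -/
def uss (f : X × Y → EReal) (xbar : X) (ybar : Y) : EReal :=
  ⨆ (ρ : ℝ) (_ : 0 < ρ),
    ⨅ (p : X × Y) (_ : dist p.1 xbar < ρ ∧ 0 < f p ∧ f p < (ρ : EReal)), nslope f ρ p

/-- The strict outer slope `\overline{|∇f|}^{>}(xbar,ybar)`. -/
def sos (f : X × Y → EReal) (xbar : X) (ybar : Y) : EReal :=
  ⨆ (ρ : ℝ) (_ : 0 < ρ),
    ⨅ (p : X × Y) (_ : dist p.1 xbar < ρ ∧ 0 < f p ∧ f p < (ρ : EReal)), lslope f ρ p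

/-- The modified strict outer slope `\overline{|∇f|}^{>+}(xbar,ybar)`. -/
def msos (f : X × Y → EReal) (xbar : X) (ybar : Y) : EReal :=
  ⨆ (ρ : ℝ) (_ : 0 < ρ),
    ⨅ (p : X × Y) (_ : dist p.1 xbar < ρ ∧ 0 < f p ∧ f p < (ρ : EReal)),
      max (lslope f ρ p) (equot (f p) (dist p.1 xbar))

/-- Graph of a set-valued mapping. -/
def gph (F : X → Set Y) : Set (X × Y) := {p | p.2 ∈ F p.1}

/-- Inverse image `F⁻¹(ybar)`. -/
def Finv (F : X → Set Y) (ybar : Y) : Set X := {x | ybar ∈ F x}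

/-- The function `f(x,y) = (d(y,ybar))^q` on `gph F`, `+∞` elsewhere. -/
def fFq (F : X → Set Y) (ybar : Y) (qq : ℝ) : X × Y → EReal :=
  fun p => if p ∈ gph F then ((dist p.2 ybar ^ qq : ℝ) : EReal) else ⊤

/-- The function `f(x,y) = ‖y - ybar‖` on `gph F`, `+∞` elsewhere (case `q = 1`). -/
def fF1 (F : X → Set Y) (ybar : Y) : X × Y → EReal :=
  fun p => if p ∈ gph F then ((dist p.2 ybar : ℝ) : EReal) else ⊤

/-- The ρ-slope `|∇F|_ρ(x,y)` of a set-valued mapping at `(x,y) ∈ gph F`. -/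
def FslopeR (F : X → Set Y) (ybar : Y) (ρ : ℝ) (p : X × Y) : EReal :=
  limsup (fun u : X × Y => equot ((max (dist p.2 ybar - dist u.2 ybar) 0 : ℝ) : EReal) (drho ρ u p))
    (𝓝[gph F \ {p}] p)

/-- The nonlocal (q,ρ)-slope `|∇F|◇_{q,ρ}(x,y)` of a set-valued mapping. -/
def FnslopeQ (F : X → Set Y) (ybar : Y) (qq ρ : ℝ) (p : X × Y) : EReal :=
  ⨆ (u : X × Y) (_ : u ∈ gph F ∧ u ≠ p),
    equot ((max (dist p.2 ybar ^ qq - dist u.2 ybar ^ qq) 0 : ℝ) : EReal) (drho ρ u p)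

/-- The uniform strict q-slope `\overline{|∇F|}^◇_q(xbar,ybar)`. -/
def ussFq (F : X → Set Y) (xbar : X) (ybar : Y) (qq : ℝ) : EReal :=
  ⨆ (ρ : ℝ) (_ : 0 < ρ),
    ⨅ (p : X × Y)
      (_ : p ∈ gph F ∧ dist p.1 xbar < ρ ∧ dist p.2 ybar < ρ ∧ p.1 ∉ Finv F ybar),
      FnslopeQ F ybar qq ρ p

/-- The strict q-slope `\overline{|∇F|}_q(xbar,ybar)`. -/
def sosFq (F : X → Set Y) (xbar : X) (ybar : Y) (qq : ℝ) : EReal :=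
  (qq : EReal) *
    ⨆ (ρ : ℝ) (_ : 0 < ρ),
      ⨅ (p : X × Y)
        (_ : p ∈ gph F ∧ dist p.1 xbar < ρ ∧ dist p.2 ybar < ρ ∧ p.1 ∉ Finv F ybar),
        ((dist p.2 ybar ^ (qq - 1) : ℝ) : EReal) * FslopeR F ybar ρ p

/-- The modified strict q-slope `\overline{|∇F|}^{+}_q(xbar,ybar)`. -/
def msosFq (F : X → Set Y) (xbar : X) (ybar : Y) (qq : ℝ) : EReal :=
  ⨆ (ρ : ℝ) (_ : 0 < ρ),
    ⨅ (p : X × Y)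
      (_ : p ∈ gph F ∧ dist p.1 xbar < ρ ∧ dist p.2 ybar < ρ ∧ p.1 ∉ Finv F ybar),
      max (((qq * dist p.2 ybar ^ (qq - 1) : ℝ) : EReal) * FslopeR F ybar ρ p)
        (equot ((dist p.2 ybar ^ qq : ℝ) : EReal) (dist p.1 xbar))

/-- The Hölder subregularity modulus of order `q`:
`liminf_{x→xbar, x∉F⁻¹(ybar)} (d(ybar,F(x)))^q / d(x,F⁻¹(ybar))`
(with `d(ybar,∅) = +∞`). -/
def srq (F : X → Set Y) (xbar : X) (ybar : Y) (qq : ℝ) : EReal :=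
  liminf
    (fun x : X =>
      equot (if F x = ∅ then ⊤ else ((infDist ybar (F x) ^ qq : ℝ) : EReal))
        (infDist x (Finv F ybar)))
    (𝓝[(Finv F ybar)ᶜ] xbar)

end MetricDefs

section NormedDefs

variable {X Y : Type*} [NormedAddCommGroup X] [NormedSpace ℝ X]
  [NormedAddCommGroup Y] [NormedSpace ℝ Y]

/-- The Fréchet subdifferential of `f : X × Y → ℝ∪{+∞}` at `p`, as a set of pairs of
continuous linear functionals (empty when `f p = ⊤`). -/
def fsubdiff (f : X × Y → EReal) (p : X × Y) : Set ((X →L[ℝ] ℝ) × (Y →L[ℝ] ℝ)) :=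
  {φ | f p ≠ ⊤ ∧ 0 ≤ liminf
      (fun q : X × Y =>
        equot (f q - f p - ((φ.1 (q.1 - p.1) + φ.2 (q.2 - p.2) : ℝ) : EReal)) (dist q p))
      (𝓝[≠] p)}

/-- The subdifferential ρ-slope `|∂f|_ρ(x,y)`. -/
def sdslope (f : X × Y → EReal) (ρ : ℝ) (p : X × Y) : EReal :=
  ⨅ (φ : (X →L[ℝ] ℝ) × (Y →L[ℝ] ℝ)) (_ : φ ∈ fsubdiff f p ∧ ‖φ.2‖ < ρ), (‖φ.1‖ : EReal)

/-- The strict outer subdifferential slope `\overline{|∂f|}^{>}(xbar,ybar)`. -/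
def ssds (f : X × Y → EReal) (xbar : X) (ybar : Y) : EReal :=
  ⨆ (ρ : ℝ) (_ : 0 < ρ),
    ⨅ (p : X × Y) (_ : dist p.1 xbar < ρ ∧ 0 < f p ∧ f p < (ρ : EReal)), sdslope f ρ p

/-- The modified strict outer subdifferential slope `\overline{|∂f|}^{>+}(xbar,ybar)`. -/
def mssds (f : X × Y → EReal) (xbar : X) (ybar : Y) : EReal :=
  ⨆ (ρ : ℝ) (_ : 0 < ρ),
    ⨅ (p : X × Y) (_ : dist p.1 xbar < ρ ∧ 0 < f p ∧ f p < (ρ : EReal)),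
      max (sdslope f ρ p) (equot (f p) (dist p.1 xbar))

/-- `f` is convex on the set `U` (with extended-real values). -/
def convexOnE (U : Set (X × Y)) (f : X × Y → EReal) : Prop :=
  Convex ℝ U ∧ ∀ p ∈ U, ∀ q ∈ U, ∀ t : ℝ, 0 ≤ t → t ≤ 1 →
    f (t • p + (1 - t) • q) ≤ (t : EReal) * f p + ((1 - t : ℝ) : EReal) * f q

/-- The Fréchet normal cone to `Ω ⊂ X × Y` at `p ∈ Ω`. -/
def ncone (Ω : Set (X × Y)) (p : X × Y) : Set ((X →L[ℝ] ℝ) × (Y →L[ℝ] ℝ)) :=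
  {φ | limsup
      (fun q : X × Y =>
        equot (((φ.1 (q.1 - p.1) + φ.2 (q.2 - p.2) : ℝ)) : EReal) (dist q p))
      (𝓝[Ω \ {p}] p) ≤ 0}

/-- The Fréchet coderivative `D*F(x,y)(y*)`. -/
def coderiv (F : X → Set Y) (p : X × Y) (ys : Y →L[ℝ] ℝ) : Set (X →L[ℝ] ℝ) :=
  {xs | (xs, -ys) ∈ ncone (gph F) p}

/-- The (normalized) duality mapping `J(y) = {y* : ‖y*‖ = 1, ⟨y*,y⟩ = ‖y‖}`. -/
def Jdual (y : Y) : Set (Y →L[ℝ] ℝ) := {ys | ‖ys‖ = 1 ∧ ys y = ‖y‖}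

/-- The subdifferential ρ-slope of `F` at `(x,y) ∈ gph F`:
`inf{‖x*‖ : x* ∈ D*F(x,y)(J(y-ybar) + ρ𝔹*)}`. -/
def FsdSlope (F : X → Set Y) (ybar : Y) (ρ : ℝ) (p : X × Y) : EReal :=
  ⨅ (xs : X →L[ℝ] ℝ)
    (_ : ∃ ws : Y →L[ℝ] ℝ, (∃ ys ∈ Jdual (p.2 - ybar), ‖ws - ys‖ ≤ ρ) ∧ xs ∈ coderiv F p ws),
    (‖xs‖ : EReal)

/-- `ξ_q(y) = ‖y - ybar‖^{1-q}/q`. -/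
def xiq (qq : ℝ) (ybar y : Y) : ℝ := ‖y - ybar‖ ^ (1 - qq) / qq

/-- The strict subdifferential q-slope `\overline{|∂F|}_q(xbar,ybar)`. -/
def ssdFq (F : X → Set Y) (xbar : X) (ybar : Y) (qq : ℝ) : EReal :=
  (qq : EReal) *
    ⨆ (ρ : ℝ) (_ : 0 < ρ),
      ⨅ (p : X × Y)
        (_ : p ∈ gph F ∧ ‖p.1 - xbar‖ < ρ ∧ ‖p.2 - ybar‖ < ρ ∧ p.1 ∉ Finv F ybar),
        ((‖p.2 - ybar‖ ^ (qq - 1) : ℝ) : EReal) * FsdSlope F ybar (xiq qq ybar p.2 * ρ) p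

/-- The modified strict subdifferential q-slope `\overline{|∂F|}^{+}_q(xbar,ybar)`. -/
def msdFq (F : X → Set Y) (xbar : X) (ybar : Y) (qq : ℝ) : EReal :=
  ⨆ (ρ : ℝ) (_ : 0 < ρ),
    ⨅ (p : X × Y)
      (_ : p ∈ gph F ∧ ‖p.1 - xbar‖ < ρ ∧ ‖p.2 - ybar‖ < ρ ∧ p.1 ∉ Finv F ybar),
      max (((qq * ‖p.2 - ybar‖ ^ (qq - 1) : ℝ) : EReal) * FsdSlope F ybar (xiq qq ybar p.2 * ρ) p)
        (equot ((‖p.2 - ybar‖ ^ qq : ℝ) : EReal) ‖p.1 - xbar‖)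

/-- The normalized ε-enlargement `J^q_ε(y)` of the q-duality mapping
`J^q(y) = q‖y‖^{q-1} J(y)`. -/
def JqEps (qq ε : ℝ) (y : Y) : Set (Y →L[ℝ] ℝ) :=
  {ws | ∃ us ∈ Jdual y, ∃ vs : Y →L[ℝ] ℝ, ‖vs‖ ≤ 1 ∧
    (qq * ‖y‖ ^ (qq - 1)) • us + ε • vs ≠ 0 ∧
    ws = ‖(qq * ‖y‖ ^ (qq - 1)) • us + ε • vs‖⁻¹ • ((qq * ‖y‖ ^ (qq - 1)) • us + ε • vs)}

/-- The constant `β` of Li and Mordukhovich. -/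
def betaLM (F : X → Set Y) (xbar : X) (ybar : Y) (qq : ℝ) : EReal :=
  ⨆ (ε : ℝ) (_ : 0 < ε),
    ⨅ (p : X × Y) (xs : X →L[ℝ] ℝ)
      (_ : p ∈ gph F ∧ p.1 ∉ Finv F ybar ∧ ‖p.1 - xbar‖ < ε ∧
           ‖p.2 - ybar‖ < min ε (‖p.1 - xbar‖ ^ (1 / 2 : ℝ)) ∧
           ∃ ws ∈ JqEps qq ε (p.2 - ybar), xs ∈ coderiv F p ws),
      ((qq * ‖xs‖ * ‖p.2 - ybar‖ ^ (qq - 1) : ℝ) : EReal)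

end NormedDefs

end HolderPaper

/-!
Shrinking the filter can only raise a liminf, and under (P2) the filter of `f(x,y) ↓ 0` forces
`y → ybar`, so the three liminfs increase from `Er f(xbar,ybar)` to the one over `f(x,y) ↓ 0`.
Conversely, `xbar ∈ S(f)` gives `d(x,S(f)) ≤ d(x,xbar)`, so every pair near `xbar` with
`f(x,y)/d(x,S(f)) < b` has `0 < f(x,y) < b·d(x,xbar)`: these pairs already satisfy `f(x,y) ↓ 0`,
and the liminf over `f(x,y) ↓ 0` is at most `b` whenever `Er f(xbar,ybar) < b`.
-/

theorem Filter.liminf_le_of_frequently_lt_of_inf_principal_le {α β : Type*}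
    [CompleteLinearOrder β] {F G : Filter α} {u : α → β} {b : β}
    (hfreq : ∃ᶠ x in F, u x < b) (hle : F ⊓ 𝓟 {x | u x < b} ≤ G) :
    liminf u G ≤ b := by
  have := frequently_iff_neBot.1 hfreq
  calc liminf u G ≤ liminf u (F ⊓ 𝓟 {x | u x < b}) := liminf_le_liminf_of_le hle
    _ ≤ b := liminf_le_of_frequently_le
      (eventually_inf_principal.2 (Eventually.of_forall fun _ hx => hx.le)).frequently

namespace HolderPaper

theorem equot_of_pos (a : EReal) {d : ℝ} (hd : 0 < d) : equot a d = a / d := by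
  rw [equot, if_neg hd.ne', EReal.div_eq_inv_mul, mul_comm, EReal.coe_inv]

theorem lt_mul_of_equot_lt {a : EReal} {d b : ℝ} (hd : 0 ≤ d) (h : equot a d < b) :
    a < ((b * d : ℝ) : EReal) := by
  rcases hd.eq_or_lt with rfl | hd
  · simp [equot] at h
  · rwa [equot_of_pos a hd, EReal.div_lt_iff (EReal.coe_pos.2 hd) (EReal.coe_ne_top d),
      ← EReal.coe_mul] at h

theorem mul_lt_of_lt_equot {a : EReal} {d c : ℝ} (hd : 0 < d) (h : (c : EReal) < equot a d) :
    ((c * d : ℝ) : EReal) < a := by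
  rwa [equot_of_pos a hd, EReal.lt_div_iff (EReal.coe_pos.2 hd) (EReal.coe_ne_top d),
    ← EReal.coe_mul] at h

section

variable {X Y : Type*} {f : X × Y → EReal} {ybar : Y}

theorem comap_nhdsGT_zero_le_principal {α : Type*} (g : α → EReal) :
    (𝓝[>] (0 : EReal)).comap g ≤ 𝓟 {p | 0 < g p} :=
  le_principal_iff.2 (preimage_mem_comap self_mem_nhdsWithin)

theorem P2.tendsto_snd [MetricSpace Y] (hP2 : P2 f ybar) :
    Tendsto Prod.snd ((𝓝[>] (0 : EReal)).comap f) (𝓝 ybar) := by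
  obtain ⟨c, hc0, hc⟩ := EReal.exists_between_coe_real hP2
  have hc0 : 0 < c := EReal.coe_pos.1 hc0
  have hslope : ∀ᶠ p in (𝓝[>] (0 : EReal)).comap f,
      (c : EReal) < equot (f p) (dist p.2 ybar) :=
    eventually_lt_of_lt_liminf hc
  refine Metric.tendsto_nhds.2 fun ε hε => ?_
  have hsmall : ∀ᶠ p in (𝓝[>] (0 : EReal)).comap f, f p < ((c * ε : ℝ) : EReal) :=
    tendsto_comap.eventually
      (nhdsWithin_le_nhds (Iio_mem_nhds (EReal.coe_pos.2 (mul_pos hc0 hε))))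
  filter_upwards [hslope, hsmall] with p hp hpε
  rcases (dist_nonneg (x := p.2) (y := ybar)).eq_or_lt with hd | hd
  · rwa [← hd]
  · have := (mul_lt_of_lt_equot hd hp).trans hpε
    exact lt_of_mul_lt_mul_left (EReal.coe_lt_coe_iff.1 this) hc0.le

theorem tendsto_nhdsGT_of_equot_infDist_lt [MetricSpace X] {xbar : X}
    (h0 : f (xbar, ybar) = 0) (b : ℝ) :
    Tendsto f ((𝓝 xbar).comap Prod.fst ⊓ 𝓟 {p | 0 < f p} ⊓
      𝓟 {p | equot (f p) (infDist p.1 (Sf f ybar)) < b}) (𝓝[>] 0) := by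
  have hbound : ∀ p : X × Y, 0 < f p → equot (f p) (infDist p.1 (Sf f ybar)) < b →
      f p ≤ ((b * dist p.1 xbar : ℝ) : EReal) := by
    intro p hpos hlt
    have hlt := lt_mul_of_equot_lt infDist_nonneg hlt
    have hb : 0 ≤ b := by
      have := EReal.coe_pos.1 (hpos.trans hlt)
      exact (pos_of_mul_pos_left this infDist_nonneg).le
    exact hlt.le.trans (EReal.coe_le_coe_iff.2 (mul_le_mul_of_nonneg_left
      (infDist_le_dist_of_mem (show xbar ∈ Sf f ybar from h0.le)) hb))
  have hlim : Tendsto (fun p : X × Y => ((b * dist p.1 xbar : ℝ) : EReal))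
      ((𝓝 xbar).comap Prod.fst) (𝓝 0) := by
    have : Tendsto (fun p : X × Y => b * dist p.1 xbar) ((𝓝 xbar).comap Prod.fst)
        (𝓝 (b * dist xbar xbar)) :=
      (tendsto_const_nhds.mul (tendsto_id.dist tendsto_const_nhds)).comp tendsto_comap
    simpa using (EReal.tendsto_coe.2 this)
  have hmem : ∀ᶠ p in (𝓝 xbar).comap Prod.fst ⊓ 𝓟 {p | 0 < f p} ⊓
      𝓟 {p | equot (f p) (infDist p.1 (Sf f ybar)) < b},
      0 < f p ∧ equot (f p) (infDist p.1 (Sf f ybar)) < b :=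
    inter_mem (le_principal_iff.1 (inf_le_left.trans inf_le_right))
      (le_principal_iff.1 inf_le_right)
  refine tendsto_nhdsWithin_iff.2 ⟨tendsto_of_tendsto_of_tendsto_of_le_of_le'
    tendsto_const_nhds (hlim.mono_left (inf_le_left.trans inf_le_left)) ?_ ?_, ?_⟩
  · exact hmem.mono fun p hp => hp.1.le
  · exact hmem.mono fun p hp => hbound p hp.1 hp.2
  · exact hmem.mono fun p hp => hp.1

end

theorem statement0_general {X Y : Type*} [MetricSpace X] [MetricSpace Y]
    (f : X × Y → EReal) (xbar : X) (ybar : Y)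
    (h0 : f (xbar, ybar) = 0)
    (hP2 : P2 f ybar) :
    erMod f xbar ybar =
      liminf (fun p : X × Y => equot (f p) (infDist p.1 (Sf f ybar)))
        ((𝓝 xbar).comap Prod.fst ⊓ (𝓝 ybar).comap Prod.snd ⊓ 𝓟 {p : X × Y | 0 < f p}) ∧
    erMod f xbar ybar =
      liminf (fun p : X × Y => equot (f p) (infDist p.1 (Sf f ybar)))
        ((𝓝 xbar).comap Prod.fst ⊓ (𝓝[>] (0 : EReal)).comap f) := by
  set u := fun p : X × Y => equot (f p) (infDist p.1 (Sf f ybar))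
  have h32 : (𝓝 xbar).comap Prod.fst ⊓ (𝓝[>] (0 : EReal)).comap f ≤
      (𝓝 xbar).comap Prod.fst ⊓ (𝓝 ybar).comap Prod.snd ⊓ 𝓟 {p | 0 < f p} :=
    le_inf (inf_le_inf_left _ hP2.tendsto_snd.le_comap)
      (inf_le_right.trans (comap_nhdsGT_zero_le_principal f))
  have h21 : (𝓝 xbar).comap Prod.fst ⊓ (𝓝 ybar).comap Prod.snd ⊓ 𝓟 {p | 0 < f p} ≤
      (𝓝 xbar).comap Prod.fst ⊓ 𝓟 {p | 0 < f p} :=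
    inf_le_inf_right _ inf_le_left
  have h31 : liminf u ((𝓝 xbar).comap Prod.fst ⊓ (𝓝[>] (0 : EReal)).comap f) ≤
      erMod f xbar ybar :=
    EReal.le_of_forall_lt_iff_le.1 fun b hb =>
      liminf_le_of_frequently_lt_of_inf_principal_le
        (frequently_lt_of_liminf_lt (by isBoundedDefault) hb)
        (le_inf (inf_le_left.trans inf_le_left)
          (tendsto_nhdsGT_of_equot_infDist_lt h0 b).le_comap)
  have h12 := liminf_le_liminf_of_le (u := u) h21
  have h23 := liminf_le_liminf_of_le (u := u) h32
  exact ⟨le_antisymm h12 (h23.trans h31), le_antisymm (h12.trans h23) h31⟩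

/-- Under (P1)-(P2), the error bound modulus admits the equivalent
representations via `x → xbar, y → ybar, f(x,y) > 0` and via `x → xbar, f(x,y) ↓ 0`. -/
theorem statement0 {X Y : Type*} [MetricSpace X] [MetricSpace Y]
    (f : X × Y → EReal) (xbar : X) (ybar : Y)
    (hbot : ∀ p, f p ≠ ⊥) (h0 : f (xbar, ybar) = 0)
    (hP1 : P1 f ybar) (hP2 : P2 f ybar) :
    erMod f xbar ybar =
      liminf (fun p : X × Y => equot (f p) (infDist p.1 (Sf f ybar)))
        ((𝓝 xbar).comap Prod.fst ⊓ (𝓝 ybar).comap Prod.snd ⊓ 𝓟 {p : X × Y | 0 < f p}) ∧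
    erMod f xbar ybar =
      liminf (fun p : X × Y => equot (f p) (infDist p.1 (Sf f ybar)))
        ((𝓝 xbar).comap Prod.fst ⊓ (𝓝[>] (0 : EReal)).comap f) :=
  statement0_general f xbar ybar h0 hP2

end HolderPaper
end
end

section
/- Under conditions (P1)–(P2), the uniform strict outer slope, the modified strict outer slope and the strict outer slope satisfy the chain of inequalities \overline{|∇f|}^◇(x̄,ȳ) ≥ \overline{|∇f|}^{>+}(x̄,ȳ) ≥ \overline{|∇f|}^{>}(x̄,ȳ). -/
open Filter Metric Set Topology
open scoped Classical

noncomputable section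

/-!
Only `msos ≤ uss` has content. Compare a point `(x,y)` with `0 < f(x,y) < ρ` with `(x̄,ȳ)` in
the nonlocal `ρ`-slope; their `d_ρ`-distance is `max{d(x,x̄), ρ d(y,ȳ)}`. If the first term
dominates, this bounds `f(x,y)/d(x,x̄)`, and the nonlocal `ρ`-slope also dominates the local
`ρ'`-slope for `ρ ≤ ρ'` (it is infinite when points with `f ≤ 0` accumulate at `(x,y)`).
Otherwise it bounds `f(x,y)/(ρ d(y,ȳ))`, which (P2) keeps above `c/ρ` for some `c > 0`, and
`c/ρ → ∞` as `ρ ↓ 0`.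
-/

namespace HolderPaper

lemma equot_eq_div (a : EReal) {d : ℝ} (hd : d ≠ 0) : equot a d = a / (d : EReal) := by
  rw [equot, if_neg hd, div_eq_mul_inv, ← EReal.coe_inv]

lemma equot_anti_right {a : EReal} {d e : ℝ} (ha : 0 ≤ a) (hd : 0 < d) (hde : d ≤ e) :
    equot a e ≤ equot a d := by
  rw [equot, if_neg (hd.trans_le hde).ne', equot, if_neg hd.ne']
  gcongr

lemma coe_le_equot_of_mul_le {c d : ℝ} {a : EReal} (hd : 0 < d) (h : ((c * d : ℝ) : EReal) ≤ a) :
    (c : EReal) ≤ equot a d := by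
  rwa [equot_eq_div _ hd.ne', EReal.le_div_iff_mul_le (by exact_mod_cast hd) (by simp),
    ← EReal.coe_mul]

lemma mul_le_of_coe_lt_equot {c d : ℝ} {a : EReal} (hd : 0 < d) (h : (c : EReal) < equot a d) :
    ((c * d : ℝ) : EReal) ≤ a := by
  rw [equot_eq_div _ hd.ne', EReal.lt_div_iff (by exact_mod_cast hd) (by simp)] at h
  exact_mod_cast h.le

theorem P2.exists_mul_dist_le {X Y : Type*} [MetricSpace Y] {f : X × Y → EReal} {ybar : Y}
    (hP2 : P2 f ybar) :
    ∃ c > (0 : ℝ), ∃ δ > (0 : ℝ), ∀ p, 0 < f p → f p < δ →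
      ((c * dist p.2 ybar : ℝ) : EReal) ≤ f p := by
  obtain ⟨c, hc, hcP2⟩ := EReal.exists_between_coe_real hP2
  obtain ⟨ε, hε, hεc⟩ := (nhdsGT_basis_of_exists_gt ⟨1, zero_lt_one⟩).eventually_iff.1
    (eventually_comap.1 (eventually_lt_of_lt_liminf hcP2))
  obtain ⟨δ, hδ, hδε⟩ := EReal.exists_between_coe_real hε
  refine ⟨c, by exact_mod_cast hc, δ, by exact_mod_cast hδ, fun p hp hpδ => ?_⟩
  rcases (dist_nonneg (x := p.2) (y := ybar)).eq_or_lt with hd | hd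
  · simpa [← hd] using hp.le
  · exact mul_le_of_coe_lt_equot hd (hεc ⟨hp, hpδ.trans hδε⟩ p rfl)

section Slopes

variable {X Y : Type*} [MetricSpace X] [MetricSpace Y]

lemma drho_comm (ρ : ℝ) (p q : X × Y) : drho ρ q p = drho ρ p q := by
  simp [drho, dist_comm]

lemma drho_pos {ρ : ℝ} (hρ : 0 < ρ) {p q : X × Y} (h : q ≠ p) : 0 < drho ρ p q := by
  rcases Prod.ext_iff.not.1 h.symm |> not_and_or.1 with h | h
  · exact lt_max_of_lt_left (dist_pos.2 h)
  · exact lt_max_of_lt_right (mul_pos hρ (dist_pos.2 h))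

lemma drho_mono {ρ ρ' : ℝ} (h : ρ ≤ ρ') (p q : X × Y) : drho ρ p q ≤ drho ρ' p q :=
  max_le_max le_rfl (mul_le_mul_of_nonneg_right h dist_nonneg)

lemma tendsto_drho (ρ : ℝ) (p : X × Y) : Tendsto (drho ρ p) (𝓝 p) (𝓝 0) := by
  have hcont : Continuous (drho ρ p) := by unfold drho; fun_prop
  simpa [drho] using hcont.tendsto p

variable {f : X × Y → EReal} {ρ : ℝ} {p q : X × Y}

lemma le_nslope (hf : f p ≠ ⊤) (hq : q ≠ p) :
    equot (max (f p - fplus f q) 0) (drho ρ p q) ≤ nslope f ρ p := by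
  rw [nslope, if_neg hf]
  exact le_iSup₂ (f := fun q (_ : q ≠ p) => equot (max (f p - fplus f q) 0) (drho ρ p q)) q hq

lemma equot_le_nslope_of_nonpos (hp : 0 ≤ f p) (hf : f p ≠ ⊤) (hq : q ≠ p) (hfq : f q ≤ 0) :
    equot (f p) (drho ρ p q) ≤ nslope f ρ p := by
  simpa [fplus, max_eq_right hfq, max_eq_left hp] using le_nslope (ρ := ρ) hf hq

lemma nslope_eq_top_of_frequently_nonpos (hρ : 0 < ρ) (hp : 0 < f p) (hf : f p ≠ ⊤)
    (h : ∃ᶠ q in 𝓝[≠] p, f q ≤ 0) : nslope f ρ p = ⊤ := by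
  refine EReal.eq_top_iff_forall_lt _ |>.2 fun c => ?_
  obtain ⟨s, hs, hsf⟩ := EReal.exists_between_coe_real hp
  have hsmall : ∀ᶠ q in 𝓝[≠] p, (c + 1) * drho ρ p q < s := by
    refine nhdsWithin_le_nhds (((tendsto_drho ρ p).const_mul (c + 1)).eventually (gt_mem_nhds ?_))
    simpa using hs
  obtain ⟨q, hfq, hcq, hqp⟩ := (h.and_eventually (hsmall.and self_mem_nhdsWithin)).exists
  have hd := drho_pos hρ hqp
  calc (c : EReal) < ((c + 1 : ℝ) : EReal) := by exact_mod_cast lt_add_one c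
    _ ≤ equot (f p) (drho ρ p q) :=
        coe_le_equot_of_mul_le hd ((EReal.coe_lt_coe_iff.2 hcq).le.trans hsf.le)
    _ ≤ nslope f ρ p := equot_le_nslope_of_nonpos hp.le hf hqp hfq

lemma lslope_le_nslope {ρ' : ℝ} (hρ : 0 < ρ) (hρρ' : ρ ≤ ρ') (hp : 0 < f p) (hf : f p ≠ ⊤) :
    lslope f ρ' p ≤ nslope f ρ p := by
  by_cases hnonneg : ∀ᶠ q in 𝓝[≠] p, 0 ≤ f q
  · refine limsup_le_of_le (by isBoundedDefault) ?_
    filter_upwards [hnonneg, self_mem_nhdsWithin] with q hfq hqp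
    calc equot (max (f p - f q) 0) (drho ρ' q p)
        ≤ equot (max (f p - f q) 0) (drho ρ p q) := by
          rw [drho_comm]
          exact equot_anti_right (le_max_right _ _) (drho_pos hρ hqp) (drho_mono hρρ' p q)
      _ = equot (max (f p - fplus f q) 0) (drho ρ p q) := by rw [fplus, max_eq_left hfq]
      _ ≤ nslope f ρ p := le_nslope hf hqp
  · rw [nslope_eq_top_of_frequently_nonpos hρ hp hf]
    · exact le_top
    · exact (Filter.not_eventually.1 hnonneg).mono fun _ h => (not_le.1 h).le

variable {xbar : X} {ybar : Y}

lemma min_le_nslope {ρ' c : ℝ} (hρ : 0 < ρ) (hρρ' : ρ ≤ ρ')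
    (h0 : f (xbar, ybar) = 0) (hp : 0 < f p) (hf : f p ≠ ⊤)
    (hc : ((c * dist p.2 ybar : ℝ) : EReal) ≤ f p) :
    min (max (lslope f ρ' p) (equot (f p) (dist p.1 xbar))) ((c / ρ : ℝ) : EReal) ≤
      nslope f ρ p := by
  have hbar : (xbar, ybar) ≠ p := fun h => by simp [← h, h0] at hp
  have hcompare := equot_le_nslope_of_nonpos (ρ := ρ) hp.le hf hbar h0.le
  rcases le_or_gt (ρ * dist p.2 ybar) (dist p.1 xbar) with hx | hy
  · refine min_le_of_left_le (max_le (lslope_le_nslope hρ hρρ' hp hf) ?_)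
    rwa [drho, max_eq_left hx] at hcompare
  · rw [drho, max_eq_right hy.le] at hcompare
    refine min_le_of_right_le (le_trans ?_ hcompare)
    refine coe_le_equot_of_mul_le (dist_nonneg.trans_lt hy) (le_of_eq_of_le ?_ hc)
    field_simp

theorem sos_le_msos : sos f xbar ybar ≤ msos f xbar ybar :=
  iSup₂_mono fun _ _ => iInf₂_mono fun _ _ => le_max_left _ _

theorem msos_le_uss (h0 : f (xbar, ybar) = 0) (hP2 : P2 f ybar) :
    msos f xbar ybar ≤ uss f xbar ybar := by
  obtain ⟨c, hc, δ, hδ, hcδ⟩ := hP2.exists_mul_dist_le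
  refine iSup₂_le fun ρ' hρ' => le_of_forall_lt fun γ hγ => ?_
  obtain ⟨g, hγg, -⟩ := EReal.exists_between_coe_real (hγ.trans_le le_top)
  obtain ⟨ρ, ⟨hρρ', hρδ⟩, hgρ, hρ⟩ : ∃ ρ, (ρ < ρ' ∧ ρ < δ) ∧ g < c / ρ ∧ 0 < ρ :=
    (((gt_mem_nhds hρ').and (gt_mem_nhds hδ)).filter_mono nhdsWithin_le_nhds |>.and <|
      ((tendsto_inv_nhdsGT_zero.const_mul_atTop hc).eventually_gt_atTop g).and
        self_mem_nhdsWithin).exists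
  calc γ < min (⨅ (p : X × Y) (_ : dist p.1 xbar < ρ' ∧ 0 < f p ∧ f p < (ρ' : EReal)),
        max (lslope f ρ' p) (equot (f p) (dist p.1 xbar))) ((c / ρ : ℝ) : EReal) :=
        lt_min hγ (hγg.trans (by exact_mod_cast hgρ))
    _ ≤ ⨅ (p : X × Y) (_ : dist p.1 xbar < ρ ∧ 0 < f p ∧ f p < (ρ : EReal)), nslope f ρ p := by
        refine le_iInf₂ fun p ⟨hx, hp, hpρ⟩ => ?_
        have hρ'E : (ρ : EReal) ≤ ρ' := by exact_mod_cast hρρ'.le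
        have hρδE : (ρ : EReal) ≤ δ := by exact_mod_cast hρδ.le
        refine (min_le_min_right _ (iInf₂_le p ⟨hx.trans hρρ', hp, hpρ.trans_le hρ'E⟩)).trans ?_
        exact min_le_nslope hρ hρρ'.le h0 hp hpρ.ne_top (hcδ p hp (hpρ.trans_le hρδE))
    _ ≤ uss f xbar ybar :=
        le_iSup₂ (f := fun ρ (_ : 0 < ρ) => ⨅ (p : X × Y)
          (_ : dist p.1 xbar < ρ ∧ 0 < f p ∧ f p < (ρ : EReal)), nslope f ρ p) ρ hρ

end Slopes

theorem statement2_general {X Y : Type*} [MetricSpace X] [MetricSpace Y]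
    (f : X × Y → EReal) (xbar : X) (ybar : Y)
    (h0 : f (xbar, ybar) = 0)
    (hP2 : P2 f ybar) :
    sos f xbar ybar ≤ msos f xbar ybar ∧ msos f xbar ybar ≤ uss f xbar ybar :=
  ⟨sos_le_msos, msos_le_uss h0 hP2⟩

/-- under (P1)-(P2),
`\overline{|∇f|}^◇ ≥ \overline{|∇f|}^{>+} ≥ \overline{|∇f|}^{>}`. -/
theorem statement2 {X Y : Type*} [MetricSpace X] [MetricSpace Y]
    (f : X × Y → EReal) (xbar : X) (ybar : Y)
    (hbot : ∀ p, f p ≠ ⊥) (h0 : f (xbar, ybar) = 0)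
    (hP1 : P1 f ybar) (hP2 : P2 f ybar) :
    sos f xbar ybar ≤ msos f xbar ybar ∧ msos f xbar ybar ≤ uss f xbar ybar :=
  statement2_general f xbar ybar h0 hP2

end HolderPaper
end
end

section
/- If X and Y are normed linear spaces, then \overline{|∇f|}^{>}(x̄,ȳ) ≤ \overline{|∂f|}^{>}(x̄,ȳ) and \overline{|∇f|}^{>+}(x̄,ȳ) ≤ \overline{|∂f|}^{>+}(x̄,ȳ). -/
/-!
A Fréchet subgradient `(x*, y*)` of `f` at `(x, y)` controls the decrease of `f` nearby:
`f(x,y) - f(u,v) ≤ ‖x*‖‖u - x‖ + ‖y*‖‖v - y‖ + o(‖(u,v) - (x,y)‖)`, and the right-hand side is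
at most `(‖x*‖ + ‖y*‖/ρ + o(1)) ‖(u,v) - (x,y)‖_ρ`, so `|∇f|_ρ(x,y) ≤ ‖x*‖ + ‖y*‖/ρ`.
If moreover `‖y*‖ < ρ' ≤ ερ`, this is at most `‖x*‖ + ε`; hence the infimum defining the slope
at radius `ρ` is at most the one defining the subdifferential slope at the smaller radius
`ρ' = min(ρ, ερ)`, plus `ε`. Letting `ε ↓ 0` gives both inequalities, the term `f(x,y)/‖x - x̄‖`
being the same on both sides of the modified ones.
-/

open Filter Metric Set Topology
open scoped Classical

noncomputable section

namespace HolderPaper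

theorem _root_.EReal.le_of_forall_pos_le_add_coe {a b : EReal}
    (h : ∀ ε : ℝ, 0 < ε → a ≤ b + ε) : a ≤ b := by
  have hlim : Tendsto (fun ε : ℝ => b + (ε : EReal)) (𝓝[>] 0) (𝓝 b) := by
    have hadd := EReal.continuousAt_add (p := (b, 0)) (Or.inr EReal.zero_ne_bot)
      (Or.inr EReal.zero_ne_top)
    have hcoe : Tendsto (fun ε : ℝ => (ε : EReal)) (𝓝[>] 0) (𝓝 0) :=
      EReal.tendsto_coe.2 nhdsWithin_le_nhds
    have h := hadd.tendsto.comp (tendsto_const_nhds.prodMk_nhds hcoe)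
    rw [add_zero] at h
    exact h
  exact ge_of_tendsto hlim (eventually_nhdsWithin_of_forall h)

theorem _root_.EReal.sub_coe_le_iff {a c : EReal} {x : ℝ} : a - x ≤ c ↔ a ≤ c + x :=
  EReal.sub_le_iff_le_add (Or.inl (EReal.coe_ne_bot x)) (Or.inl (EReal.coe_ne_top x))

theorem iSup_iInf_le_iSup_iInf_of_forall_le_add {P : Type*} {S : ℝ → P → Prop}
    {A B : ℝ → P → EReal}
    (h : ∀ ρ > 0, ∀ ε : ℝ, 0 < ε → ∃ ρ' > 0, ∀ p, S ρ' p → S ρ p ∧ A ρ p ≤ B ρ' p + ε) :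
    ⨆ (ρ : ℝ) (_ : 0 < ρ), ⨅ (p : P) (_ : S ρ p), A ρ p ≤
      ⨆ (ρ : ℝ) (_ : 0 < ρ), ⨅ (p : P) (_ : S ρ p), B ρ p := by
  refine iSup₂_le fun ρ hρ => EReal.le_of_forall_pos_le_add_coe fun ε hε => ?_
  obtain ⟨ρ', hρ', hAB⟩ := h ρ hρ ε hε
  calc ⨅ (p : P) (_ : S ρ p), A ρ p ≤ (⨅ (p : P) (_ : S ρ' p), B ρ' p) + ε := by
        refine EReal.sub_coe_le_iff.1 (le_iInf₂ fun p hp => EReal.sub_coe_le_iff.2 ?_)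
        exact (iInf₂_le p (hAB p hp).1).trans (hAB p hp).2
    _ ≤ _ := by
        gcongr
        exact le_iSup₂ (f := fun ρ (_ : 0 < ρ) => ⨅ (p : P) (_ : S ρ p), B ρ p) ρ' hρ'

theorem equot_coe_of_ne_zero (a : ℝ) {d : ℝ} (hd : d ≠ 0) :
    equot a d = ((a / d : ℝ) : EReal) := by
  rw [equot, if_neg hd, ← EReal.coe_mul, div_eq_mul_inv]

section MetricSpace

variable {X Y : Type*} [MetricSpace X] [MetricSpace Y]

theorem min_one_mul_dist_le_drho {ρ : ℝ} (hρ : 0 ≤ ρ) (p q : X × Y) :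
    min 1 ρ * dist p q ≤ drho ρ p q := by
  rw [Prod.dist_eq, mul_max_of_nonneg _ _ (le_min zero_le_one hρ)]
  exact max_le_max (mul_le_of_le_one_left dist_nonneg (min_le_left _ _))
    (mul_le_mul_of_nonneg_right (min_le_right _ _) dist_nonneg)

end MetricSpace

section NormedSpace

variable {X Y : Type*} [NormedAddCommGroup X] [NormedSpace ℝ X]
  [NormedAddCommGroup Y] [NormedSpace ℝ Y]

theorem abs_apply_add_apply_le_drho {ρ : ℝ} (hρ : 0 < ρ) (φ : (X →L[ℝ] ℝ) × (Y →L[ℝ] ℝ))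
    (p q : X × Y) :
    |φ.1 (q.1 - p.1) + φ.2 (q.2 - p.2)| ≤ (‖φ.1‖ + ‖φ.2‖ / ρ) * drho ρ q p := by
  have h₁ : |φ.1 (q.1 - p.1)| ≤ ‖φ.1‖ * drho ρ q p := by
    rw [← Real.norm_eq_abs]
    refine (φ.1.le_opNorm _).trans (mul_le_mul_of_nonneg_left ?_ (norm_nonneg _))
    exact (dist_eq_norm q.1 p.1).symm.le.trans (le_max_left _ _)
  have h₂ : |φ.2 (q.2 - p.2)| ≤ ‖φ.2‖ / ρ * drho ρ q p := by
    rw [← Real.norm_eq_abs, div_mul_eq_mul_div, le_div_iff₀ hρ]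
    refine mul_le_mul_of_nonneg_right (φ.2.le_opNorm _) hρ.le |>.trans ?_
    rw [mul_assoc, mul_comm _ ρ, ← dist_eq_norm]
    exact mul_le_mul_of_nonneg_left (le_max_right _ _) (norm_nonneg _)
  linarith [abs_add_le (φ.1 (q.1 - p.1)) (φ.2 (q.2 - p.2))]

theorem lslope_le_of_mem_fsubdiff {f : X × Y → EReal} {ρ : ℝ} {p : X × Y}
    {φ : (X →L[ℝ] ℝ) × (Y →L[ℝ] ℝ)} (hp : f p ≠ ⊥) (hρ : 0 < ρ) (hφ : φ ∈ fsubdiff f p) :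
    lslope f ρ p ≤ ((‖φ.1‖ + ‖φ.2‖ / ρ : ℝ) : EReal) := by
  obtain ⟨hp_top, hφ⟩ := hφ
  obtain ⟨r, hr⟩ : ∃ r : ℝ, f p = r := ⟨_, (EReal.coe_toReal hp_top hp).symm⟩
  refine EReal.le_of_forall_pos_le_add_coe fun ε hε => ?_
  -- `ε · min 1 ρ · dist ≤ ε · drho ρ`, so this slack in the Fréchet inequality costs only `ε`.
  have hslack : ((-(ε * min 1 ρ) : ℝ) : EReal) < 0 :=
    EReal.coe_lt_coe_iff.2 (neg_neg_of_pos (mul_pos hε (lt_min one_pos hρ)))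
  have hev := eventually_lt_of_lt_liminf (hslack.trans_le hφ)
  rw [← EReal.coe_add]
  refine limsup_le_of_le (by isBoundedDefault) ?_
  filter_upwards [hev, self_mem_nhdsWithin] with q hq hqp
  have hd : 0 < dist q p := dist_pos.2 hqp
  have hD : 0 < drho ρ q p :=
    (mul_pos (lt_min one_pos hρ) hd).trans_le (min_one_mul_dist_le_drho hρ.le q p)
  rw [hr] at hq ⊢
  generalize f q = t at hq ⊢
  induction t using EReal.rec with
  | bot =>
    rw [EReal.bot_sub, EReal.bot_sub, equot, if_neg hd.ne',
      EReal.bot_mul_of_pos (EReal.coe_pos.2 (inv_pos.2 hd))] at hq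
    exact absurd hq not_lt_bot
  | top =>
    rw [EReal.sub_top, max_eq_right bot_le, equot, if_neg hD.ne', zero_mul]
    exact EReal.coe_nonneg.2 (by positivity)
  | coe s =>
    rw [← EReal.coe_sub, ← EReal.coe_sub, equot_coe_of_ne_zero _ hd.ne', EReal.coe_lt_coe_iff,
      lt_div_iff₀ hd] at hq
    rw [← EReal.coe_sub, ← EReal.coe_zero, ← EReal.coe_strictMono.monotone.map_max,
      equot_coe_of_ne_zero _ hD.ne', EReal.coe_le_coe_iff, div_le_iff₀ hD]
    refine max_le ?_ (by positivity)
    have hL := (abs_le.1 (abs_apply_add_apply_le_drho hρ φ p q)).1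
    have hdist := mul_le_mul_of_nonneg_left (min_one_mul_dist_le_drho hρ.le q p) hε.le
    linarith

theorem lslope_le_sdslope_add {f : X × Y → EReal} {ρ ρ' ε : ℝ} {p : X × Y} (hp : f p ≠ ⊥)
    (hρ : 0 < ρ) (hρ' : ρ' ≤ ε * ρ) : lslope f ρ p ≤ sdslope f ρ' p + ε := by
  refine EReal.sub_coe_le_iff.1 (le_iInf₂ fun φ ⟨hφ, hφ₂⟩ => EReal.sub_coe_le_iff.2 ?_)
  rw [← EReal.coe_add]
  refine (lslope_le_of_mem_fsubdiff hp hρ hφ).trans (EReal.coe_le_coe_iff.2 ?_)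
  have : ‖φ.2‖ / ρ ≤ ε := (div_le_iff₀ hρ).2 (hφ₂.le.trans hρ')
  linarith

end NormedSpace

theorem statement4_general {X Y : Type*} [NormedAddCommGroup X] [NormedSpace ℝ X] [NormedAddCommGroup Y] [NormedSpace ℝ Y]
    (f : X × Y → EReal) (xbar : X) (ybar : Y) :
    sos f xbar ybar ≤ ssds f xbar ybar ∧ msos f xbar ybar ≤ mssds f xbar ybar := by
  have key : ∀ ρ > 0, ∀ ε : ℝ, 0 < ε → ∃ ρ' > 0, ∀ p : X × Y,
      (dist p.1 xbar < ρ' ∧ 0 < f p ∧ f p < (ρ' : EReal)) →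
        (dist p.1 xbar < ρ ∧ 0 < f p ∧ f p < (ρ : EReal)) ∧
          lslope f ρ p ≤ sdslope f ρ' p + ε := by
    intro ρ hρ ε hε
    refine ⟨min ρ (ε * ρ), lt_min hρ (mul_pos hε hρ), fun p ⟨hx, hpos, hlt⟩ => ⟨?_, ?_⟩⟩
    · exact ⟨hx.trans_le (min_le_left _ _), hpos,
        hlt.trans_le (EReal.coe_le_coe_iff.2 (min_le_left _ _))⟩
    · exact lslope_le_sdslope_add (ne_bot_of_gt hpos) hρ (min_le_right _ _)
  refine ⟨iSup_iInf_le_iSup_iInf_of_forall_le_add key,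
    iSup_iInf_le_iSup_iInf_of_forall_le_add fun ρ hρ ε hε => ?_⟩
  obtain ⟨ρ', hρ', hkey⟩ := key ρ hρ ε hε
  refine ⟨ρ', hρ', fun p hp => ⟨(hkey p hp).1, max_le ?_ ?_⟩⟩
  · exact (hkey p hp).2.trans (by gcongr; exact le_max_left _ _)
  · exact (le_max_right _ _).trans (le_add_of_nonneg_right (EReal.coe_nonneg.2 hε.le))

/-- in normed spaces,
`\overline{|∇f|}^{>} ≤ \overline{|∂f|}^{>}` and `\overline{|∇f|}^{>+} ≤ \overline{|∂f|}^{>+}`. -/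
theorem statement4 {X Y : Type*} [NormedAddCommGroup X] [NormedSpace ℝ X] [NormedAddCommGroup Y] [NormedSpace ℝ Y]
    (f : X × Y → EReal) (xbar : X) (ybar : Y)
    (hbot : ∀ p, f p ≠ ⊥) (h0 : f (xbar, ybar) = 0) :
    sos f xbar ybar ≤ ssds f xbar ybar ∧ msos f xbar ybar ≤ mssds f xbar ybar :=
  statement4_general f xbar ybar

end HolderPaper
end
end

section
/- Under conditions (P1)–(P2), the error bound modulus is bounded above by the uniform strict outer slope: Er f(x̄,ȳ) ≤ \overline{|∇f|}^◇(x̄,ȳ). -/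
open Filter Metric Set Topology
open scoped Classical

noncomputable section

/-!
Let `c < Er f(x̄, ȳ)` with `c > 0`. Near `x̄`, a pair `(x, y)` with small value `r = f(x, y) > 0`
has, by the error bound, a point `u ∈ S(f)` with `c d(x, u) < r`, and, by (P2), it satisfies
`α d(y, ȳ) < r` for a fixed `α > 0`. As `f₊(u, ȳ) = 0`, the pair `(u, ȳ)` witnesses
`|∇f|◇_ρ(x, y) ≥ r / d_ρ((x, y), (u, ȳ)) ≥ c` as soon as `ρ ≤ α / c`.
-/

lemma EReal.exists_coe_of_pos_of_lt_coe {a : EReal} {b : ℝ} (ha : 0 < a) (hab : a < b) :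
    ∃ r : ℝ, a = r ∧ 0 < r ∧ r < b := by
  induction a using EReal.rec with
  | bot => exact absurd ha (not_lt_of_ge bot_le)
  | top => exact absurd hab (not_lt_of_ge le_top)
  | coe r => exact ⟨r, rfl, EReal.coe_pos.1 ha, EReal.coe_lt_coe_iff.1 hab⟩

namespace HolderPaper

lemma coe_le_equot {c r d : ℝ} (hd : 0 ≤ d) (h : c * d ≤ r) : (c : EReal) ≤ equot r d := by
  rw [equot]
  split_ifs with hd0
  · exact le_top
  · have hd' : 0 < d := hd.lt_of_ne' hd0
    rw [← EReal.coe_mul, EReal.coe_le_coe_iff, ← div_eq_mul_inv, le_div_iff₀ hd']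
    exact h

lemma mul_lt_of_coe_lt_equot {c r d : ℝ} (hd : 0 ≤ d) (hr : 0 < r)
    (h : (c : EReal) < equot r d) : c * d < r := by
  rcases hd.eq_or_lt with rfl | hd'
  · simp [hr]
  · rw [equot, if_neg hd'.ne', ← EReal.coe_mul, EReal.coe_lt_coe_iff, ← div_eq_mul_inv,
      lt_div_iff₀ hd'] at h
    exact h

section

variable {X Y : Type*} [MetricSpace X] [MetricSpace Y]

lemma coe_le_nslope {f : X × Y → EReal} {ρ c r : ℝ} {p q : X × Y} (hfp : f p = r) (hr : 0 < r)
    (hfq : f q ≤ 0) (h : c * drho ρ p q ≤ r) : (c : EReal) ≤ nslope f ρ p := by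
  have hqp : q ≠ p := by
    rintro rfl
    exact lt_irrefl _ (hfq.trans_lt (hfp ▸ EReal.coe_pos.2 hr))
  rw [nslope, if_neg (hfp ▸ EReal.coe_ne_top r)]
  refine le_iSup₂_of_le q hqp ?_
  rw [fplus, max_eq_right hfq, hfp, sub_zero, max_eq_left (EReal.coe_nonneg.2 hr.le)]
  exact coe_le_equot (le_max_of_le_left dist_nonneg) h

lemma coe_le_uss {f : X × Y → EReal} {xbar : X} {ybar : Y} {c ρ : ℝ} (hρ : 0 < ρ)
    (h : ∀ p : X × Y, dist p.1 xbar < ρ → ∀ r : ℝ, f p = r → 0 < r → r < ρ →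
      (c : EReal) ≤ nslope f ρ p) :
    (c : EReal) ≤ uss f xbar ybar := by
  refine le_iSup₂_of_le ρ hρ (le_iInf₂ fun p ⟨hpx, hpf, hpρ⟩ => ?_)
  obtain ⟨r, hfp, hr, hrρ⟩ := EReal.exists_coe_of_pos_of_lt_coe hpf hpρ
  exact h p hpx r hfp hr hrρ

lemma uss_nonneg {f : X × Y → EReal} {xbar : X} {ybar : Y} {q : X × Y} (hq : f q ≤ 0) :
    0 ≤ uss f xbar ybar := by
  simpa using coe_le_uss (c := 0) (xbar := xbar) (ybar := ybar) one_pos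
    fun p _ r hfp hr _ => coe_le_nslope hfp hr hq ((zero_mul _).trans_le hr.le)

omit [MetricSpace X] in
lemma P2.exists_mul_dist_lt {f : X × Y → EReal} {ybar : Y} (hP2 : P2 f ybar) :
    ∃ α > 0, ∃ δ > 0, ∀ p : X × Y, ∀ r : ℝ, f p = r → 0 < r → r < δ →
      α * dist p.2 ybar < r := by
  obtain ⟨α, hα, hαlt⟩ := EReal.lt_iff_exists_real_btwn.1 hP2
  have hev := eventually_comap.1 (eventually_lt_of_lt_liminf hαlt)
  obtain ⟨δ', hδ', hδset⟩ :=
    (nhdsGT_basis_of_exists_gt ⟨1, zero_lt_one⟩).eventually_iff.1 hev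
  obtain ⟨δ, hδ, hδδ'⟩ := EReal.lt_iff_exists_real_btwn.1 hδ'
  refine ⟨α, EReal.coe_pos.1 hα, δ, EReal.coe_pos.1 hδ, fun p r hfp hr hrδ => ?_⟩
  have hmem : (r : EReal) ∈ Ioo 0 δ' :=
    ⟨EReal.coe_pos.2 hr, (EReal.coe_lt_coe_iff.2 hrδ).trans hδδ'⟩
  exact mul_lt_of_coe_lt_equot dist_nonneg hr (hfp ▸ hδset hmem p hfp)

omit [MetricSpace Y] in
lemma exists_pos_forall_lt_equot_of_lt_erMod {f : X × Y → EReal} {xbar : X} {ybar : Y} {c : ℝ}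
    (h : (c : EReal) < erMod f xbar ybar) :
    ∃ ε > 0, ∀ p : X × Y, dist p.1 xbar < ε → 0 < f p →
      (c : EReal) < equot (f p) (infDist p.1 (Sf f ybar)) := by
  have hev := eventually_lt_of_lt_liminf h
  rw [eventually_inf_principal, eventually_comap, Metric.eventually_nhds_iff] at hev
  obtain ⟨ε, hε, hε'⟩ := hev
  exact ⟨ε, hε, fun p hp hfp => hε' hp p rfl hfp⟩

lemma coe_le_uss_of_lt_erMod {f : X × Y → EReal} {xbar : X} {ybar : Y}
    (h0 : f (xbar, ybar) = 0) (hP2 : P2 f ybar) {c : ℝ} (hc : 0 < c)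
    (hcEr : (c : EReal) < erMod f xbar ybar) : (c : EReal) ≤ uss f xbar ybar := by
  obtain ⟨α, hα, δ, hδ, hdy⟩ := hP2.exists_mul_dist_lt
  obtain ⟨ε, hε, hdx⟩ := exists_pos_forall_lt_equot_of_lt_erMod hcEr
  have hS : (Sf f ybar).Nonempty := ⟨xbar, h0.le⟩
  set ρ := min ε (min δ (α / c))
  have hρ : 0 < ρ := lt_min hε (lt_min hδ (div_pos hα hc))
  refine coe_le_uss hρ fun p hpx r hfp hr hrρ => ?_
  have hy : α * dist p.2 ybar < r :=
    hdy p r hfp hr (hrρ.trans_le ((min_le_right _ _).trans (min_le_left _ _)))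
  have hinf : c * infDist p.1 (Sf f ybar) < r :=
    mul_lt_of_coe_lt_equot infDist_nonneg hr
      (hfp ▸ hdx p (hpx.trans_le (min_le_left _ _)) (hfp ▸ EReal.coe_pos.2 hr))
  obtain ⟨u, hu, hxu⟩ := (infDist_lt_iff hS).1 ((lt_div_iff₀' hc).2 hinf)
  refine coe_le_nslope hfp hr hu ?_
  rw [drho, mul_max_of_nonneg _ _ hc.le]
  refine max_le ((lt_div_iff₀' hc).1 hxu).le ?_
  have hcρ : c * ρ ≤ α := (le_div_iff₀' hc).1 ((min_le_right _ _).trans (min_le_right _ _))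
  calc c * (ρ * dist p.2 ybar) = (c * ρ) * dist p.2 ybar := (mul_assoc _ _ _).symm
    _ ≤ α * dist p.2 ybar := mul_le_mul_of_nonneg_right hcρ dist_nonneg
    _ ≤ r := hy.le

end

theorem statement8_general {X Y : Type*} [MetricSpace X] [MetricSpace Y]
    (f : X × Y → EReal) (xbar : X) (ybar : Y)
    (h0 : f (xbar, ybar) = 0) (hP2 : P2 f ybar) :
    erMod f xbar ybar ≤ uss f xbar ybar := by
  refine EReal.ge_of_forall_gt_iff_ge.1 fun c hc => ?_
  rcases le_or_gt c 0 with hc0 | hc0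
  · exact (EReal.coe_nonpos.2 hc0).trans (uss_nonneg h0.le)
  · exact coe_le_uss_of_lt_erMod h0 hP2 hc0 hc

/-- under (P1)-(P2), `Er f(xbar,ybar) ≤ \overline{|∇f|}^◇(xbar,ybar)`. -/
theorem statement8 {X Y : Type*} [MetricSpace X] [MetricSpace Y]
    (f : X × Y → EReal) (xbar : X) (ybar : Y)
    (hbot : ∀ p, f p ≠ ⊥) (h0 : f (xbar, ybar) = 0)
    (hP1 : P1 f ybar) (hP2 : P2 f ybar) :
    erMod f xbar ybar ≤ uss f xbar ybar :=
  statement8_general f xbar ybar h0 hP2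

end HolderPaper
end
end
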